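/- arXiv:1607.01583 — 2 statements merged into one kernel-verified Lean document; each statement's English description precedes it below -/
import Mathlib

section
/- Let 1 < p < 2, T > 0, and let f, g : [0,T] → ℝ be measurable functions with ∫₀ᵀ |f(t)|^p dt < ∞ and ∫₀ᵀ |g(t)|^p dt < ∞. Then ∫₀ᵀ |f(t) − g(t)|^p dt ≤ 2^{(p−1)(2−p)/2}·(‖f‖_{L^p}^p + ‖g‖_{L^p}^p)^{(2−p)/2}·(∫₀ᵀ (f(t) − g(t))² / (|f(t)| + |g(t)|)^{2−p} dt)^{p/2}, where the integrand (f(t) − g(t))² / (|f(t)| + |g(t)|)^{2−p} is interpreted as 0 at points where f(t) = g(t) = 0. -/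
/-!
Write `u = f - g` and `s = |f| + |g|`, so that `|u| ≤ s`. Pointwise
`|u|^p = (u²/s^(2-p))^(p/2) · (s^p)^((2-p)/2)`, and Hölder's inequality with exponents
`2/p` and `2/(2-p)` bounds `∫ |u|^p` by `(∫ u²/s^(2-p))^(p/2) · (∫ s^p)^((2-p)/2)`.
Finally `s^p ≤ 2^(p-1) (|f|^p + |g|^p)` by convexity of `x ↦ x^p`.
-/

open MeasureTheory

namespace Real

lemma rpow_add_le_mul_rpow_add_rpow {a b p : ℝ} (ha : 0 ≤ a) (hb : 0 ≤ b) (hp : 1 ≤ p) :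
    (a + b) ^ p ≤ 2 ^ (p - 1) * (a ^ p + b ^ p) := by
  lift a to NNReal using ha
  lift b to NNReal using hb
  exact_mod_cast NNReal.rpow_add_le_mul_rpow_add_rpow a b hp

lemma sq_div_rpow_le_rpow {x s : ℝ} (q : ℝ) (h : |x| ≤ s) : x ^ 2 / s ^ (2 - q) ≤ s ^ q := by
  obtain rfl | hs := (abs_nonneg x).trans h |>.eq_or_lt
  · rw [abs_nonpos_iff.mp h, sq, zero_mul, zero_div]
    exact rpow_nonneg le_rfl q
  calc x ^ 2 / s ^ (2 - q) ≤ s ^ 2 / s ^ (2 - q) := by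
        gcongr ?_ / _
        exact sq_le_sq' (abs_le.mp h).1 (abs_le.mp h).2
    _ = s ^ q := by rw [← rpow_natCast, ← rpow_sub hs]; norm_num

lemma abs_rpow_eq_sq_div_rpow_mul_rpow {x s p : ℝ} (hp : 0 < p) (h : |x| ≤ s) :
    |x| ^ p = (x ^ 2 / s ^ (2 - p)) ^ (p / 2) * (s ^ p) ^ ((2 - p) / 2) := by
  have hs : 0 ≤ s := (abs_nonneg x).trans h
  rw [show (s ^ p) ^ ((2 - p) / 2) = (s ^ (2 - p)) ^ (p / 2) by
      rw [← rpow_mul hs, ← rpow_mul hs]; ring_nf,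
    ← mul_rpow (by positivity) (rpow_nonneg hs _)]
  obtain rfl | hs_pos := hs.eq_or_lt
  · rw [abs_nonpos_iff.mp h, sq, zero_mul, zero_div, zero_mul, abs_zero, zero_rpow hp.ne',
      zero_rpow (by positivity)]
  rw [div_mul_cancel₀ _ (rpow_pos_of_pos hs_pos _).ne', ← sq_abs, ← rpow_natCast,
    ← rpow_mul (abs_nonneg x), Nat.cast_ofNat, mul_div_cancel₀ p two_ne_zero]

end Real

section

variable {α : Type*} [MeasurableSpace α] {μ : Measure α}

theorem integral_rpow_mul_rpow_le {F G : α → ℝ} (hF0 : 0 ≤ᵐ[μ] F) (hG0 : 0 ≤ᵐ[μ] G)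
    (hF : Integrable F μ) (hG : Integrable G μ) {a b : ℝ} (ha : 0 ≤ a) (hb : 0 ≤ b)
    (hab : a + b = 1) :
    ∫ x, F x ^ a * G x ^ b ∂μ ≤ (∫ x, F x ∂μ) ^ a * (∫ x, G x ∂μ) ^ b := by
  have hFG0 : 0 ≤ᵐ[μ] fun x => F x ^ a * G x ^ b := by
    filter_upwards [hF0, hG0] with x hFx hGx
    exact mul_nonneg (Real.rpow_nonneg hFx a) (Real.rpow_nonneg hGx b)
  have hFGm : AEStronglyMeasurable (fun x => F x ^ a * G x ^ b) μ :=
    ((hF.aemeasurable.pow_const a).mul (hG.aemeasurable.pow_const b)).aestronglyMeasurable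
  rw [integral_eq_lintegral_of_nonneg_ae hFG0 hFGm, integral_eq_lintegral_of_nonneg_ae hF0 hF.1,
    integral_eq_lintegral_of_nonneg_ae hG0 hG.1, ENNReal.toReal_rpow, ENNReal.toReal_rpow,
    ← ENNReal.toReal_mul]
  refine ENNReal.toReal_mono (ENNReal.mul_ne_top (ENNReal.rpow_ne_top_of_nonneg ha
    hF.lintegral_lt_top.ne) (ENNReal.rpow_ne_top_of_nonneg hb hG.lintegral_lt_top.ne)) ?_
  calc ∫⁻ x, ENNReal.ofReal (F x ^ a * G x ^ b) ∂μ
      = ∫⁻ x, ENNReal.ofReal (F x) ^ a * ENNReal.ofReal (G x) ^ b ∂μ := by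
        refine lintegral_congr_ae ?_
        filter_upwards [hF0, hG0] with x hFx hGx
        rw [ENNReal.ofReal_mul (Real.rpow_nonneg hFx a), ENNReal.ofReal_rpow_of_nonneg hFx ha,
          ENNReal.ofReal_rpow_of_nonneg hGx hb]
    _ ≤ _ := ENNReal.lintegral_mul_norm_pow_le hF.aemeasurable.ennreal_ofReal
        hG.aemeasurable.ennreal_ofReal ha hb hab

theorem integral_abs_rpow_le_of_abs_le {u s : α → ℝ} {p : ℝ} (hp0 : 0 < p) (hp2 : p ≤ 2)
    (hu : AEMeasurable u μ) (hs : AEMeasurable s μ) (hus : ∀ᵐ x ∂μ, |u x| ≤ s x)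
    (hsp : Integrable (fun x => s x ^ p) μ) :
    ∫ x, |u x| ^ p ∂μ ≤
      (∫ x, u x ^ 2 / s x ^ (2 - p) ∂μ) ^ (p / 2) * (∫ x, s x ^ p ∂μ) ^ ((2 - p) / 2) := by
  have hs0 : ∀ᵐ x ∂μ, 0 ≤ s x := hus.mono fun x hx => (abs_nonneg _).trans hx
  have hF0 : 0 ≤ᵐ[μ] fun x => u x ^ 2 / s x ^ (2 - p) := by
    filter_upwards [hs0] with x hx
    exact div_nonneg (sq_nonneg _) (Real.rpow_nonneg hx _)
  have hF : Integrable (fun x => u x ^ 2 / s x ^ (2 - p)) μ := by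
    refine hsp.mono' ((hu.pow_const 2).div (hs.pow_const _)).aestronglyMeasurable ?_
    filter_upwards [hus, hF0] with x hx hFx
    rw [Real.norm_of_nonneg hFx]
    exact Real.sq_div_rpow_le_rpow p hx
  calc ∫ x, |u x| ^ p ∂μ
      = ∫ x, (u x ^ 2 / s x ^ (2 - p)) ^ (p / 2) * (s x ^ p) ^ ((2 - p) / 2) ∂μ := by
        refine integral_congr_ae ?_
        filter_upwards [hus] with x hx using Real.abs_rpow_eq_sq_div_rpow_mul_rpow hp0 hx
    _ ≤ _ := integral_rpow_mul_rpow_le hF0 (hs0.mono fun x hx => Real.rpow_nonneg hx p) hF hsp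
        (by linarith) (by linarith) (by ring)

theorem integrable_abs_add_abs_rpow {f g : α → ℝ} {p : ℝ} (hp : 1 ≤ p) (hf : AEMeasurable f μ)
    (hg : AEMeasurable g μ) (hfp : Integrable (fun x => |f x| ^ p) μ)
    (hgp : Integrable (fun x => |g x| ^ p) μ) :
    Integrable (fun x => (|f x| + |g x|) ^ p) μ := by
  refine ((hfp.add hgp).const_mul (2 ^ (p - 1))).mono'
    ((hf.abs.add hg.abs).pow_const p).aestronglyMeasurable (ae_of_all _ fun x => ?_)
  rw [Real.norm_of_nonneg (by positivity)]
  exact Real.rpow_add_le_mul_rpow_add_rpow (abs_nonneg _) (abs_nonneg _) hp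

theorem integral_abs_add_abs_rpow_le {f g : α → ℝ} {p : ℝ} (hp : 1 ≤ p) (hf : AEMeasurable f μ)
    (hg : AEMeasurable g μ) (hfp : Integrable (fun x => |f x| ^ p) μ)
    (hgp : Integrable (fun x => |g x| ^ p) μ) :
    ∫ x, (|f x| + |g x|) ^ p ∂μ ≤ 2 ^ (p - 1) * (∫ x, |f x| ^ p ∂μ + ∫ x, |g x| ^ p ∂μ) := by
  rw [← integral_add hfp hgp, ← MeasureTheory.integral_const_mul]
  exact integral_mono (integrable_abs_add_abs_rpow hp hf hg hfp hgp)
    ((hfp.add hgp).const_mul _)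
    fun x => Real.rpow_add_le_mul_rpow_add_rpow (abs_nonneg _) (abs_nonneg _) hp

end

/-- For `1 < p < 2`, `T > 0` and measurable `f, g` with
`∫₀ᵀ |f|^p < ∞`, `∫₀ᵀ |g|^p < ∞`, one has
`∫₀ᵀ |f − g|^p ≤ 2^{(p−1)(2−p)/2}·(‖f‖_{L^p}^p + ‖g‖_{L^p}^p)^{(2−p)/2}
·(∫₀ᵀ (f − g)²/(|f| + |g|)^{2−p})^{p/2}`, the integrand
`(f(t) − g(t))²/(|f(t)| + |g(t)|)^{2−p}` being interpreted as `0` where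
`f(t) = g(t) = 0` (which is Lean's convention, as `0/0 = 0`). -/
theorem stmt_8 (p T : ℝ) (hp1 : 1 < p) (hp2 : p < 2) (hT : 0 < T)
    (f g : ℝ → ℝ) (hf : Measurable f) (hg : Measurable g)
    (hfp : IntervalIntegrable (fun t => |f t| ^ p) volume 0 T)
    (hgp : IntervalIntegrable (fun t => |g t| ^ p) volume 0 T) :
    (∫ t in (0 : ℝ)..T, |f t - g t| ^ p) ≤
      2 ^ ((p - 1) * (2 - p) / 2) *
        ((∫ t in (0 : ℝ)..T, |f t| ^ p) + ∫ t in (0 : ℝ)..T, |g t| ^ p)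
          ^ ((2 - p) / 2) *
        (∫ t in (0 : ℝ)..T,
            (f t - g t) ^ 2 / (|f t| + |g t|) ^ (2 - p)) ^ (p / 2) := by
  simp only [intervalIntegral.integral_of_le hT.le]
  rw [intervalIntegrable_iff_integrableOn_Ioc_of_le hT.le] at hfp hgp
  calc ∫ t in Set.Ioc 0 T, |f t - g t| ^ p
      ≤ (∫ t in Set.Ioc 0 T, (f t - g t) ^ 2 / (|f t| + |g t|) ^ (2 - p)) ^ (p / 2) *
          (∫ t in Set.Ioc 0 T, (|f t| + |g t|) ^ p) ^ ((2 - p) / 2) :=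
        integral_abs_rpow_le_of_abs_le (by linarith) hp2.le (hf.sub hg).aemeasurable
          (hf.abs.add hg.abs).aemeasurable (ae_of_all _ fun t => abs_sub _ _)
          (integrable_abs_add_abs_rpow hp1.le hf.aemeasurable hg.aemeasurable hfp hgp)
    _ ≤ (∫ t in Set.Ioc 0 T, (f t - g t) ^ 2 / (|f t| + |g t|) ^ (2 - p)) ^ (p / 2) *
          (2 ^ (p - 1) * ((∫ t in Set.Ioc 0 T, |f t| ^ p) + ∫ t in Set.Ioc 0 T, |g t| ^ p))
            ^ ((2 - p) / 2) := by
        gcongr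
        exact integral_abs_add_abs_rpow_le hp1.le hf.aemeasurable hg.aemeasurable hfp hgp
    _ = _ := by
        rw [Real.mul_rpow (by positivity) (by positivity), ← Real.rpow_mul zero_le_two,
          ← mul_div_assoc]
        ring
end

section
/- Let 1 < p < ∞, 1/p < α ≤ 1, T > 0, and let v : [0,T] → ℝ be a measurable function with ∫₀ᵀ |v(s)|^p ds < ∞. Define w(t) = (1/Γ(α)) ∫₀ᵗ (t−s)^{α−1} v(s) ds. Then there exists a constant C > 0, depending only on α and p, such that for all 0 ≤ t₁ ≤ t₂ ≤ T, |w(t₂) − w(t₁)| ≤ C·‖v‖_{L^p}·(t₂ − t₁)^{α − 1/p}. -/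
open MeasureTheory intervalIntegral

open Set

private lemma rpow_superadd {x y q : ℝ} (hx : 0 ≤ x) (hy : 0 ≤ y) (hq : 1 ≤ q) :
    x ^ q + y ^ q ≤ (x + y) ^ q := by
  have h := NNReal.add_rpow_le_rpow_add (⟨x, hx⟩ : NNReal) ⟨y, hy⟩ hq
  have h2 := NNReal.coe_le_coe.mpr h
  push_cast [NNReal.coe_rpow] at h2
  exact h2

private lemma memLp_of_int {r : ℝ} (hr : 0 < r) {f : ℝ → ℝ} (hf : Measurable f) {s : Set ℝ}
    (hint : IntegrableOn (fun x => |f x| ^ r) s) :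
    MemLp f (ENNReal.ofReal r) (volume.restrict s) := by
  have h1 : (ENNReal.ofReal r) ≠ 0 := by
    simp [ENNReal.ofReal_eq_zero, not_le, hr]
  have h2 : (ENNReal.ofReal r) ≠ ⊤ := ENNReal.ofReal_ne_top
  rw [← memLp_norm_rpow_iff (q := ENNReal.ofReal r) hf.aestronglyMeasurable h1 h2,
    ENNReal.div_self h1 h2, ENNReal.toReal_ofReal hr.le, memLp_one_iff_integrable]
  simpa [Real.norm_eq_abs, IntegrableOn] using hint

private lemma holder_set {p q : ℝ} (hpq : Real.HolderConjugate p q) {s : Set ℝ}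
    {k v : ℝ → ℝ} (hk : Measurable k) (hv : Measurable v)
    (hkq : IntegrableOn (fun x => |k x| ^ q) s)
    (hvp : IntegrableOn (fun x => |v x| ^ p) s) :
    |∫ x in s, k x * v x| ≤
      (∫ x in s, |k x| ^ q) ^ (1 / q) * (∫ x in s, |v x| ^ p) ^ (1 / p) := by
  have hkm : MemLp k (ENNReal.ofReal q) (volume.restrict s) :=
    memLp_of_int hpq.symm.pos hk hkq
  have hvm : MemLp v (ENNReal.ofReal p) (volume.restrict s) :=
    memLp_of_int hpq.pos hv hvp
  have h2 := MeasureTheory.integral_mul_norm_le_Lp_mul_Lq hpq.symm hkm hvm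
  calc |∫ x in s, k x * v x| ≤ ∫ x in s, ‖k x * v x‖ :=
        by simpa [Real.norm_eq_abs] using MeasureTheory.norm_integral_le_integral_norm (μ := volume.restrict s) (fun x => k x * v x)
    _ = ∫ x in s, ‖k x‖ * ‖v x‖ := by simp [norm_mul]
    _ ≤ (∫ x in s, ‖k x‖ ^ q) ^ (1 / q) * (∫ x in s, ‖v x‖ ^ p) ^ (1 / p) := h2
    _ = _ := by simp [Real.norm_eq_abs]

/-- For `1 < p < ∞`, `1/p < α ≤ 1`, `T > 0` and measurable
`v : [0,T] → ℝ` with `∫₀ᵀ |v|^p < ∞`, the fractional integral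
`w(t) = (1/Γ(α)) ∫₀ᵗ (t−s)^{α−1} v(s) ds` is Hölder continuous: there is a
constant `C > 0`, depending only on `α` and `p`, such that
`|w(t₂) − w(t₁)| ≤ C·‖v‖_{L^p}·(t₂ − t₁)^{α−1/p}` for `0 ≤ t₁ ≤ t₂ ≤ T`. -/
theorem stmt_11 (α p T : ℝ) (hp : 1 < p) (hα0 : 1 / p < α) (hα1 : α ≤ 1)
    (hT : 0 < T) (v : ℝ → ℝ) (hv : Measurable v)
    (hvp : IntervalIntegrable (fun s => |v s| ^ p) volume 0 T)
    (w : ℝ → ℝ)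
    (hw : ∀ t, w t = (1 / Real.Gamma α) * ∫ s in (0 : ℝ)..t, (t - s) ^ (α - 1) * v s) :
    ∃ C > (0 : ℝ), ∀ t₁ t₂ : ℝ, 0 ≤ t₁ → t₁ ≤ t₂ → t₂ ≤ T →
      |w t₂ - w t₁| ≤
        C * (∫ s in (0 : ℝ)..T, |v s| ^ p) ^ (1 / p) * (t₂ - t₁) ^ (α - 1 / p) := by
  have hp0 : 0 < p := lt_trans one_pos hp
  set q : ℝ := p / (p - 1) with hqdef
  have hpq : p.HolderConjugate q := Real.HolderConjugate.conjExponent hp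
  have hq1 : 1 < q := hpq.symm.lt
  have hq0 : 0 < q := hpq.symm.pos
  set r : ℝ := (α - 1) * q with hrdef
  set β : ℝ := r + 1 with hβdef
  set γ : ℝ := α - 1 / p with hγdef
  have hγ0 : 0 < γ := by rw [hγdef]; linarith
  have hqinv : q * q⁻¹ = 1 := mul_inv_cancel₀ hq0.ne'
  have hpinv : (p : ℝ)⁻¹ = 1 - q⁻¹ := by
    have := hpq.inv_add_inv_eq_one; linarith
  have hqp : q * p⁻¹ = q - 1 := by
    calc q * p⁻¹ = q - q * q⁻¹ := by rw [hpinv]; ring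
      _ = q - 1 := by rw [hqinv]
  have hβγ : β = q * γ := by
    rw [hβdef, hrdef, hγdef]
    have : q * (α - 1 / p) = q * α - q * p⁻¹ := by rw [one_div]; ring
    rw [this, hqp]; ring
  have hβ0 : 0 < β := hβγ ▸ mul_pos hq0 hγ0
  have hr : (-1 : ℝ) < r := by rw [hβdef] at hβ0; linarith
  have hγβq : β * (1 / q) = γ := by
    rw [hβγ]; field_simp
  have hα0' : (0 : ℝ) < α := lt_trans (by positivity) hα0
  have hΓ : 0 < Real.Gamma α := Real.Gamma_pos_of_pos hα0'
  refine ⟨2 * (1 / Real.Gamma α) * (1 / β) ^ (1 / q), by positivity, ?_⟩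
  intro t₁ t₂ ht₁ ht₁₂ ht₂
  have ht₂T : t₂ ≤ T := ht₂
  have ht₁T : t₁ ≤ T := le_trans ht₁₂ ht₂
  have hδ : 0 ≤ t₂ - t₁ := by linarith
  -- integrability of |v|^p on subintervals
  have hvT : IntegrableOn (fun s => |v s| ^ p) (Ioc 0 T) := hvp.1
  have hvloc : ∀ a b : ℝ, 0 ≤ a → b ≤ T → IntegrableOn (fun s => |v s| ^ p) (Ioc a b) :=
    fun a b ha hb => hvT.mono_set (Set.Ioc_subset_Ioc ha hb)
  -- kernel measurability
  have hkm : ∀ c : ℝ, Measurable (fun s : ℝ => (c - s) ^ (α - 1)) :=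
    fun c => (measurable_const.sub measurable_id).pow measurable_const
  -- kernel integrability (power r)
  have hker_int : ∀ c a b : ℝ, IntervalIntegrable (fun s => (c - s) ^ r) volume a b := by
    intro c a b
    have h := intervalIntegral.intervalIntegrable_rpow' (a := c - a) (b := c - b) hr
    simpa using h.comp_sub_left c
  -- |kernel|^q = (c-s)^r when the base is nonneg
  have habs : ∀ c s : ℝ, 0 ≤ c - s → |(c - s) ^ (α - 1)| ^ q = (c - s) ^ r := by
    intro c s h
    rw [abs_of_nonneg (Real.rpow_nonneg h _), ← Real.rpow_mul h, ← hrdef]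
  have hkerabs : ∀ c a b : ℝ, a ≤ b → b ≤ c →
      IntegrableOn (fun s => |(c - s) ^ (α - 1)| ^ q) (Ioc a b) := by
    intro c a b hab hbc
    refine ((hker_int c a b).1).congr_fun ?_ measurableSet_Ioc
    intro s hs
    exact (habs c s (by have := hs.2; linarith)).symm
  -- interval integrability of kernel * v
  have hprod : ∀ c a b : ℝ, 0 ≤ a → a ≤ b → b ≤ T → b ≤ c →
      IntervalIntegrable (fun s => (c - s) ^ (α - 1) * v s) volume a b := by
    intro c a b ha hab hbT hbc
    rw [intervalIntegrable_iff_integrableOn_Ioc_of_le hab]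
    have hKm : MemLp (fun s : ℝ => (c - s) ^ (α - 1)) (ENNReal.ofReal q)
        (volume.restrict (Ioc a b)) :=
      memLp_of_int hq0 (hkm c) (hkerabs c a b hab hbc)
    have hVm : MemLp v (ENNReal.ofReal p) (volume.restrict (Ioc a b)) :=
      memLp_of_int hp0 hv (hvloc a b ha hbT)
    have hpqr : (1 : ENNReal) / 1 = 1 / ENNReal.ofReal q + 1 / ENNReal.ofReal p := by
      simp only [one_div]
      rw [inv_one]
      exact (hpq.symm.inv_add_inv_ennreal).symm
    have := hVm.smul hKm (r := 1) (hpqr := hpq.symm.ennrealOfReal)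
    rw [memLp_one_iff_integrable] at this
    exact this
  have hrne : r + 1 ≠ 0 := by rw [← hβdef]; exact hβ0.ne'
  have hint1 : ∀ c a b : ℝ, ∫ s in a..b, (c - s) ^ r
      = ((c - a) ^ (r + 1) - (c - b) ^ (r + 1)) / (r + 1) := by
    intro c a b
    have e := intervalIntegral.integral_comp_sub_left (a := a) (b := b)
      (fun u : ℝ => u ^ r) c
    rw [e, integral_rpow (Or.inl hr)]
  -- the splitting of the integral
  have hsplit : ∫ s in (0:ℝ)..t₂, (t₂ - s) ^ (α - 1) * v s
      = (∫ s in (0:ℝ)..t₁, (t₂ - s) ^ (α - 1) * v s)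
        + ∫ s in t₁..t₂, (t₂ - s) ^ (α - 1) * v s :=
    (intervalIntegral.integral_add_adjacent_intervals
      (hprod t₂ 0 t₁ le_rfl ht₁ ht₁T ht₁₂) (hprod t₂ t₁ t₂ ht₁ ht₁₂ ht₂T le_rfl)).symm
  have hdiff : (∫ s in (0:ℝ)..t₁, (t₂ - s) ^ (α - 1) * v s)
      - ∫ s in (0:ℝ)..t₁, (t₁ - s) ^ (α - 1) * v s
      = ∫ s in (0:ℝ)..t₁, ((t₂ - s) ^ (α - 1) - (t₁ - s) ^ (α - 1)) * v s := by
    rw [← intervalIntegral.integral_sub (hprod t₂ 0 t₁ le_rfl ht₁ ht₁T ht₁₂)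
      (hprod t₁ 0 t₁ le_rfl ht₁ ht₁T le_rfl)]
    apply intervalIntegral.integral_congr
    intro s _
    ring
  have hkey : w t₂ - w t₁ = (1 / Real.Gamma α) *
      ((∫ s in (0:ℝ)..t₁, ((t₂ - s) ^ (α - 1) - (t₁ - s) ^ (α - 1)) * v s)
        + ∫ s in t₁..t₂, (t₂ - s) ^ (α - 1) * v s) := by
    rw [hw t₂, hw t₁, hsplit, ← hdiff]
    ring
  -- notation
  set P : ℝ := ∫ s in Ioc (0:ℝ) T, |v s| ^ p with hPdef
  have hPeq : ∫ s in (0:ℝ)..T, |v s| ^ p = P := intervalIntegral.integral_of_le hT.le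
  have hP0 : 0 ≤ P := setIntegral_nonneg measurableSet_Ioc (fun x _ => by positivity)
  set K : ℝ := (t₂ - t₁) ^ β / β with hKdef
  have hK0 : 0 ≤ K := div_nonneg (Real.rpow_nonneg hδ _) hβ0.le
  -- estimate of the second term
  have hB : |∫ s in t₁..t₂, (t₂ - s) ^ (α - 1) * v s| ≤ K ^ (1 / q) * P ^ (1 / p) := by
    rw [intervalIntegral.integral_of_le ht₁₂]
    refine le_trans (holder_set hpq (hkm t₂) hv (hkerabs t₂ t₁ t₂ ht₁₂ le_rfl)
      (hvloc t₁ t₂ ht₁ ht₂T)) ?_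
    have hJb : ∫ s in Ioc t₁ t₂, |(t₂ - s) ^ (α - 1)| ^ q = K := by
      rw [← intervalIntegral.integral_of_le ht₁₂]
      have hEq : ∀ s ∈ Set.uIcc t₁ t₂, |(t₂ - s) ^ (α - 1)| ^ q = (t₂ - s) ^ r := by
        intro s hs
        rw [Set.uIcc_of_le ht₁₂] at hs
        exact habs t₂ s (by linarith [hs.2])
      rw [intervalIntegral.integral_congr hEq, hint1 t₂ t₁ t₂, sub_self,
        Real.zero_rpow hrne, hKdef, hβdef]
      ring
    have hPb : ∫ s in Ioc t₁ t₂, |v s| ^ p ≤ P := by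
      refine setIntegral_mono_set hvT (Filter.Eventually.of_forall fun x => by positivity) ?_
      exact (Set.Ioc_subset_Ioc ht₁ ht₂T).eventuallyLE
    have hPb0 : 0 ≤ ∫ s in Ioc t₁ t₂, |v s| ^ p :=
      setIntegral_nonneg measurableSet_Ioc (fun x _ => by positivity)
    rw [hJb]
    exact mul_le_mul_of_nonneg_left (Real.rpow_le_rpow hPb0 hPb (by positivity))
      (Real.rpow_nonneg hK0 _)
  -- estimate of the first term
  have hba : ∀ s ∈ Ioo (0:ℝ) t₁, (t₂ - s) ^ (α - 1) ≤ (t₁ - s) ^ (α - 1) := by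
    intro s hs
    rcases eq_or_lt_of_le hα1 with h | h
    · rw [← h]
      simp
    · exact Real.rpow_le_rpow_of_nonpos (by linarith [hs.2]) (by linarith) (by linarith)
  have hdkabs : ∀ s ∈ Ioo (0:ℝ) t₁, |(t₂ - s) ^ (α - 1) - (t₁ - s) ^ (α - 1)|
      = (t₁ - s) ^ (α - 1) - (t₂ - s) ^ (α - 1) := by
    intro s hs
    rw [abs_sub_comm]
    exact abs_of_nonneg (sub_nonneg.mpr (hba s hs))
  have hA : |∫ s in (0:ℝ)..t₁, ((t₂ - s) ^ (α - 1) - (t₁ - s) ^ (α - 1)) * v s|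
      ≤ K ^ (1 / q) * P ^ (1 / p) := by
    rw [intervalIntegral.integral_of_le ht₁, integral_Ioc_eq_integral_Ioo]
    have hdkm : Measurable (fun s : ℝ => (t₂ - s) ^ (α - 1) - (t₁ - s) ^ (α - 1)) :=
      (hkm t₂).sub (hkm t₁)
    have hvint : IntegrableOn (fun s => |v s| ^ p) (Ioo 0 t₁) :=
      (hvloc 0 t₁ le_rfl ht₁T).mono_set Set.Ioo_subset_Ioc_self
    have hdkint : IntegrableOn
        (fun s => |(t₂ - s) ^ (α - 1) - (t₁ - s) ^ (α - 1)| ^ q) (Ioo 0 t₁) := by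
      have hgint : IntegrableOn (fun s => (t₁ - s) ^ r) (Ioo 0 t₁) :=
        ((hker_int t₁ 0 t₁).1).mono_set Set.Ioo_subset_Ioc_self
      refine hgint.mono' (hdkm.abs.pow measurable_const).aestronglyMeasurable ?_
      filter_upwards [ae_restrict_mem measurableSet_Ioo] with s hs
      have h1 : (0:ℝ) < t₁ - s := by linarith [hs.2]
      rw [Real.norm_eq_abs, abs_of_nonneg (Real.rpow_nonneg (abs_nonneg _) _)]
      calc |(t₂ - s) ^ (α - 1) - (t₁ - s) ^ (α - 1)| ^ q
          ≤ ((t₁ - s) ^ (α - 1)) ^ q := by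
            apply Real.rpow_le_rpow (abs_nonneg _) _ hq0.le
            rw [hdkabs s hs]
            have := Real.rpow_nonneg
              (show (0:ℝ) ≤ t₂ - s by linarith [hs.1, hs.2]) (α - 1)
            linarith
        _ = (t₁ - s) ^ r := by
            rw [← Real.rpow_mul h1.le, hrdef]
    refine le_trans (holder_set hpq hdkm hv hdkint hvint) ?_
    have hJa0 : 0 ≤ ∫ s in Ioo (0:ℝ) t₁, |(t₂ - s) ^ (α - 1) - (t₁ - s) ^ (α - 1)| ^ q :=
      setIntegral_nonneg measurableSet_Ioo (fun x _ => by positivity)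
    have hJa : ∫ s in Ioo (0:ℝ) t₁, |(t₂ - s) ^ (α - 1) - (t₁ - s) ^ (α - 1)| ^ q ≤ K := by
      have step1 : ∫ s in Ioo (0:ℝ) t₁, |(t₂ - s) ^ (α - 1) - (t₁ - s) ^ (α - 1)| ^ q
          ≤ ∫ s in Ioo (0:ℝ) t₁, ((t₁ - s) ^ r - (t₂ - s) ^ r) := by
        refine setIntegral_mono_on hdkint ?_ measurableSet_Ioo ?_
        · exact (((hker_int t₁ 0 t₁).1).mono_set Set.Ioo_subset_Ioc_self).sub
            (((hker_int t₂ 0 t₁).1).mono_set Set.Ioo_subset_Ioc_self)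
        · intro s hs
          have h1 : (0:ℝ) < t₁ - s := by linarith [hs.2]
          have h2 : (0:ℝ) < t₂ - s := by linarith [hs.1, hs.2]
          have hb0 : 0 ≤ (t₂ - s) ^ (α - 1) := Real.rpow_nonneg h2.le _
          have hba' := hba s hs
          have key := rpow_superadd (sub_nonneg.mpr hba') hb0 hq1.le
          rw [sub_add_cancel] at key
          rw [hdkabs s hs]
          have e1 : ((t₁ - s) ^ (α - 1)) ^ q = (t₁ - s) ^ r := by
            rw [← Real.rpow_mul h1.le, hrdef]
          have e2 : ((t₂ - s) ^ (α - 1)) ^ q = (t₂ - s) ^ r := by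
            rw [← Real.rpow_mul h2.le, hrdef]
          rw [← e1, ← e2]
          linarith [key]
      have step2 : ∫ s in Ioo (0:ℝ) t₁, ((t₁ - s) ^ r - (t₂ - s) ^ r)
          = (t₁ ^ β - t₂ ^ β + (t₂ - t₁) ^ β) / β := by
        rw [← integral_Ioc_eq_integral_Ioo, ← intervalIntegral.integral_of_le ht₁,
          intervalIntegral.integral_sub (hker_int t₁ 0 t₁) (hker_int t₂ 0 t₁),
          hint1 t₁ 0 t₁, hint1 t₂ 0 t₁, sub_self, Real.zero_rpow hrne, sub_zero, sub_zero,
          hβdef]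
        ring
      have ht₁β : t₁ ^ β ≤ t₂ ^ β := Real.rpow_le_rpow ht₁ ht₁₂ hβ0.le
      calc ∫ s in Ioo (0:ℝ) t₁, |(t₂ - s) ^ (α - 1) - (t₁ - s) ^ (α - 1)| ^ q
          ≤ (t₁ ^ β - t₂ ^ β + (t₂ - t₁) ^ β) / β := step1.trans (le_of_eq step2)
        _ ≤ (t₂ - t₁) ^ β / β := by
            apply div_le_div_of_nonneg_right ?_ hβ0.le
            · linarith
        _ = K := hKdef.symm
    have hPa : ∫ s in Ioo (0:ℝ) t₁, |v s| ^ p ≤ P := by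
      refine setIntegral_mono_set hvT (Filter.Eventually.of_forall fun x => by positivity) ?_
      exact ((Set.Ioo_subset_Ioc_self).trans (Set.Ioc_subset_Ioc le_rfl ht₁T)).eventuallyLE
    have hPa0 : 0 ≤ ∫ s in Ioo (0:ℝ) t₁, |v s| ^ p :=
      setIntegral_nonneg measurableSet_Ioo (fun x _ => by positivity)
    exact mul_le_mul (Real.rpow_le_rpow hJa0 hJa (by positivity))
      (Real.rpow_le_rpow hPa0 hPa (by positivity)) (Real.rpow_nonneg hPa0 _)
      (Real.rpow_nonneg hK0 _)
  -- put everything together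
  have hKval : K ^ (1 / q) = (1 / β) ^ (1 / q) * (t₂ - t₁) ^ γ := by
    rw [hKdef, div_eq_mul_one_div, Real.mul_rpow (Real.rpow_nonneg hδ _) (by positivity),
      ← Real.rpow_mul hδ, hγβq, mul_comm]
  rw [hkey, abs_mul, abs_of_nonneg (by positivity : (0:ℝ) ≤ 1 / Real.Gamma α), hPeq]
  calc (1 / Real.Gamma α) *
      |(∫ s in (0:ℝ)..t₁, ((t₂ - s) ^ (α - 1) - (t₁ - s) ^ (α - 1)) * v s)
        + ∫ s in t₁..t₂, (t₂ - s) ^ (α - 1) * v s|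
      ≤ (1 / Real.Gamma α) * (K ^ (1 / q) * P ^ (1 / p) + K ^ (1 / q) * P ^ (1 / p)) := by
        apply mul_le_mul_of_nonneg_left _ (by positivity)
        exact le_trans (abs_add_le _ _) (add_le_add hA hB)
    _ = 2 * (1 / Real.Gamma α) * K ^ (1 / q) * P ^ (1 / p) := by ring
    _ = 2 * (1 / Real.Gamma α) * (1 / β) ^ (1 / q) * P ^ (1 / p) * (t₂ - t₁) ^ γ := by
        rw [hKval]; ring
end
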